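/- arXiv:1312.3002 — 3 statements merged into one kernel-verified Lean document; each statement's English description precedes it below -/
import Mathlib

section
/- Let (A_1,...,A_n) and (B_1,...,B_m) be nonempty sequences of words from W_ω with maximal index collections (g_1,...,g_r) and (h_1,...,h_t) respectively. Let k = max({0} ∪ {i | 1 ≤ i ≤ r and B_{h_1} ≾ A_{g_i}}). Then the (n+m)-bounded index collection (g_1,...,g_k, n+h_1,...,n+h_t) is maximal for the concatenated sequence (A_1,...,A_n, B_1,...,B_m). -/
open scoped Classical

/-- Words: finite strings over the alphabet of natural numbers. -/
abbrev Word := List ℕ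

/-- Lexicographic "not greater" comparison of finite sequences of words,
where entries are compared with the preorder `r`. -/
def LexLe (r : Word → Word → Prop) (xs ys : List Word) : Prop :=
  (xs.length ≤ ys.length ∧ ∀ i < xs.length,
      r (xs.getD i []) (ys.getD i []) ∧ r (ys.getD i []) (xs.getD i []))
  ∨ ∃ s, s < xs.length ∧ s < ys.length ∧
      (∀ i < s, r (xs.getD i []) (ys.getD i []) ∧ r (ys.getD i []) (xs.getD i [])) ∧
      r (xs.getD s []) (ys.getD s []) ∧ ¬ r (ys.getD s []) (xs.getD s [])

/-- `M` is a lexicographically maximal subsequence of `xs` (w.r.t. entry preorder `r`). -/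
def IsLexMax (r : Word → Word → Prop) (xs M : List Word) : Prop :=
  M.Sublist xs ∧ ∀ N : List Word, N.Sublist xs → LexLe r N M

/-- Fuelled version of the recursively defined preorder `≾` on words:
`Λ ≾ Λ`; and if `n` is the minimal symbol of `A ++ B`, split `A` and `B` into
blocks at `n` and compare the lexicographically maximal subsequences of blocks. -/
def leAux : ℕ → Word → Word → Prop
  | 0, A, B => A = [] ∧ B = []
  | (fuel+1), A, B =>
      (A = [] ∧ B = []) ∨
      (∀ m, (A ++ B).min? = some m →
        ∀ MA MB : List Word, IsLexMax (leAux fuel) (A.splitOn m) MA →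
          IsLexMax (leAux fuel) (B.splitOn m) MB →
          LexLe (leAux fuel) MA MB)

/-- The preorder `≾` on words (the fuel `|A|+|B|+1` suffices for the recursion). -/
def Wle (A B : Word) : Prop := leAux (A.length + B.length + 1) A B

/-- The equivalence `∼`: `A ≾ B` and `B ≾ A`. -/
def Wequiv (A B : Word) : Prop := Wle A B ∧ Wle B A

/-- The strict relation `≺`: `A ≾ B` and not `B ≾ A`. -/
def Wlt (A B : Word) : Prop := Wle A B ∧ ¬ Wle B A

/-- Fuelled version of the normal form predicate `NF`. -/
def NFAux : ℕ → Word → Prop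
  | 0, A => A = []
  | (fuel+1), A => A = [] ∨ ∀ m, A.min? = some m →
      (A.splitOn m).Chain' (fun x y => Wle y x) ∧ ∀ b ∈ A.splitOn m, NFAux fuel b

/-- `A` is in normal form. -/
def InNF (A : Word) : Prop := NFAux A.length A

/-- `◇ₖ A`: the normal form of the word `A` with symbol `k` appended. -/
noncomputable def diamond (k : ℕ) (A : Word) : Word :=
  if h : ∃ B, InNF B ∧ Wequiv B (A ++ [k]) then h.choose else []

/-- Fuelled version of the ordinal value functions `o_n` on normal-form words in `S_n`. -/
noncomputable def oAux : ℕ → ℕ → Word → Ordinal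
  | 0, _, _ => 0
  | (fuel+1), n, A =>
      if A.all (· = n) then (A.length : Ordinal)
      else ((A.splitOn n).map (fun b => Ordinal.omega0 ^ oAux fuel (n+1) b)).foldr (· + ·) 0

/-- The ordinal value function `o_n : NF ∩ S_n → Ordinals`. -/
noncomputable def oW (n : ℕ) (A : Word) : Ordinal :=
  oAux (A.foldr max 0 + A.length + 1) n A

/-- The towers of `ω`-exponentiations: `ω_0 = 1`, `ω_{n+1} = ω ^ ω_n`. -/
noncomputable def omegaTower : ℕ → Ordinal
  | 0 => 1
  | (n+1) => Ordinal.omega0 ^ omegaTower n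

/-- `ε₀`, the supremum of the `ω`-towers. -/
noncomputable def eps0 : Ordinal := ⨆ n : ℕ, omegaTower n

/-- The function `ψ` on ordinals: `ψ 0 = ω`, and for `α > 0` with Cantor normal form
`ω^{α_1}+⋯+ω^{α_n}` (non-increasing exponents), `ψ α = ω^{α_1}+⋯+ω^{α_{n-1}}+ω^{α_n+1}`. -/
noncomputable def psi (α : Ordinal) : Ordinal :=
  match (Ordinal.CNF Ordinal.omega0 α).getLast? with
  | none => Ordinal.omega0
  | some p =>
      ((Ordinal.CNF Ordinal.omega0 α).dropLast).foldr
        (fun q r => Ordinal.omega0 ^ q.1 * q.2 + r) 0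
      + (Ordinal.omega0 ^ p.1 * (p.2 - 1) + Ordinal.omega0 ^ (p.1 + 1))

/-- The standard fundamental sequences `α[n]` for limit ordinals below `ε₀`
(junk values elsewhere). -/
noncomputable def fundSeq (α : Ordinal) (n : ℕ) : Ordinal :=
  match (Ordinal.CNF Ordinal.omega0 α).getLast? with
  | none => 0
  | some p =>
    let pre := ((Ordinal.CNF Ordinal.omega0 α).dropLast).foldr
        (fun q r => Ordinal.omega0 ^ q.1 * q.2 + r) 0
      + Ordinal.omega0 ^ p.1 * (p.2 - 1)
    if p.1 = 0 then 0
    else if h : ∃ e', p.1 = e' + 1 then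
      pre + Ordinal.omega0 ^ h.choose * ((n : Ordinal) + 1)
    else if hlt : p.1 < α then pre + Ordinal.omega0 ^ (fundSeq p.1 n) else 0
termination_by α
decreasing_by exact hlt

/-- The relation `R`: `α R β` iff `β = α + 1`, or `β` is a limit and `α = β[n]` for some `n`. -/
def Rrel (α β : Ordinal) : Prop :=
  β = α + 1 ∨ (Order.IsSuccLimit β ∧ ∃ n : ℕ, α = fundSeq β n)
def IndexColl (n : ℕ) (s : List ℕ) : Prop :=
  s.Chain' (· < ·) ∧ ∀ i ∈ s, 1 ≤ i ∧ i ≤ n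

def SubseqOf (L : List Word) (s : List ℕ) : List Word :=
  s.map (fun i => L.getD (i - 1) [])

def IsMaxColl (L : List Word) (s : List ℕ) : Prop :=
  IndexColl L.length s ∧ ∀ N : List Word, N.Sublist L → LexLe Wle N (SubseqOf L s)

/-!
`Wle` is a total preorder. Induct on the alphabet `T` of the words: splitting at the least letter
`μ` of `T` produces blocks over `T.erase μ`, on which `Wle` is a total preorder by induction, so
lexicographically maximal block sequences exist and are unique up to equivalence. Then `A ≾ B`
holds iff the maximal block sequence of `A` is lexicographically below that of `B`; this also
holds when `μ` does not occur in `A ++ B`, as each word is then its own only block. Thus `Wle` is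
the pullback of a total preorder. The fuel of `leAux` is irrelevant once it exceeds the size of
the alphabet, because each recursive call removes the splitting letter.

A maximal subsequence is non-increasing, since deleting an entry must not make it larger. Let
`M` and `b :: B` be the maximal subsequences of the two sequences; the first `k` entries of `M`
are `≿ b` and the next one is `≺ b`. A subsequence of the concatenation is `N₁ ++ N₂` with
`N₁ ≤ M` and `N₂ ≤ b :: B`, and `N₁ ++ N₂ ≤ N₁ ++ b :: B ≤ M.take k ++ b :: B`. The last step
compares position by position: either `N₁` falls strictly below `M` before position `k`, or it
reaches position `k`, where `M` drops below `b`, or it stops early, and then the non-increasing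
`b :: B` is dominated entrywise by what follows in `M.take k ++ b :: B`.
-/

open List

section LexLe

variable {r r' : Word → Word → Prop} {x y : Word} {xs ys zs X Y : List Word}

theorem lexLe_nil_left (ys : List Word) : LexLe r [] ys :=
  Or.inl ⟨Nat.zero_le _, by simp⟩

theorem not_lexLe_cons_nil : ¬ LexLe r (x :: xs) [] := by
  rintro (⟨hlen, -⟩ | ⟨s, -, hs, -⟩) <;> simp at *

theorem lexLe_cons_cons :
    LexLe r (x :: xs) (y :: ys) ↔ r x y ∧ (r y x → LexLe r xs ys) := by
  simp only [LexLe, length_cons, Nat.add_le_add_iff_right, Nat.forall_lt_succ_left,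
    getD_cons_zero, getD_cons_succ]
  constructor
  · rintro (⟨hlen, ⟨hxy, hyx⟩, h⟩ | ⟨s, hsx, hsy, hpre, hle, hnot⟩)
    · exact ⟨hxy, fun _ => Or.inl ⟨hlen, h⟩⟩
    · cases s with
      | zero => exact ⟨hle, fun h => absurd h hnot⟩
      | succ s =>
        obtain ⟨⟨hxy, -⟩, hpre⟩ := Nat.forall_lt_succ_left.mp hpre
        refine ⟨hxy, fun _ => Or.inr ⟨s, by omega, by omega, hpre, ?_, ?_⟩⟩
        · simpa using hle
        · simpa using hnot
  · rintro ⟨hxy, h⟩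
    by_cases hyx : r y x
    · rcases h hyx with ⟨hlen, h⟩ | ⟨s, hsx, hsy, hpre, hle, hnot⟩
      · exact Or.inl ⟨hlen, ⟨hxy, hyx⟩, h⟩
      · refine Or.inr ⟨s + 1, by omega, by omega, ?_, by simpa using hle, by simpa using hnot⟩
        exact Nat.forall_lt_succ_left.mpr ⟨⟨hxy, hyx⟩, hpre⟩
    · exact Or.inr ⟨0, by omega, by omega, by simp, hxy, hyx⟩

@[simp]
theorem lexLe_singleton_singleton : LexLe r [x] [y] ↔ r x y := by
  simp [lexLe_cons_cons, lexLe_nil_left]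

theorem lexLe_congr {s : Set Word} (h : ∀ a ∈ s, ∀ b ∈ s, r a b ↔ r' a b)
    (hX : ∀ x ∈ X, x ∈ s) (hY : ∀ y ∈ Y, y ∈ s) : LexLe r X Y ↔ LexLe r' X Y := by
  induction X generalizing Y with
  | nil => simp [lexLe_nil_left]
  | cons x X ih =>
    cases Y with
    | nil => simp [not_lexLe_cons_nil]
    | cons y Y =>
      simp only [forall_mem_cons] at hX hY
      rw [lexLe_cons_cons, lexLe_cons_cons, h x hX.1 y hY.1, h y hY.1 x hX.1, ih hX.2 hY.2]

theorem lexLe_of_forall_getElem (hlen : X.length ≤ Y.length)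
    (h : ∀ i (hi : i < X.length), r X[i] (Y[i]'(hi.trans_le hlen))) : LexLe r X Y := by
  induction X generalizing Y with
  | nil => exact lexLe_nil_left Y
  | cons x X ih =>
    cases Y with
    | nil => simp at hlen
    | cons y Y =>
      simp only [length_cons, Nat.add_le_add_iff_right] at hlen
      exact lexLe_cons_cons.mpr ⟨h 0 (by simp), fun _ => ih hlen fun i hi => h (i + 1) (by simpa)⟩

theorem lexLe_append_left [Std.Refl r] : LexLe r (xs ++ ys) (xs ++ zs) ↔ LexLe r ys zs := by
  induction xs with
  | nil => rfl
  | cons x xs ih => simp [lexLe_cons_cons, refl_of r x, ih]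

end LexLe

structure TotalPreorderOn {α : Type*} (r : α → α → Prop) (s : Set α) : Prop where
  total : ∀ a ∈ s, ∀ b ∈ s, r a b ∨ r b a
  trans : ∀ a ∈ s, ∀ b ∈ s, ∀ c ∈ s, r a b → r b c → r a c

namespace TotalPreorderOn

variable {α β : Type*} {r : α → α → Prop} {s : Set α}

theorem of_subsingleton (hs : s.Subsingleton) (hr : ∀ a ∈ s, r a a) : TotalPreorderOn r s where
  total a ha _ hb := Or.inl (hs ha hb ▸ hr a ha)
  trans a ha _ _ _ hc _ _ := hs ha hc ▸ hr a ha

theorem comap {r' : β → β → Prop} {t : Set β} (h : TotalPreorderOn r s) {f : β → α}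
    (hf : ∀ b ∈ t, f b ∈ s) (hr : ∀ a ∈ t, ∀ b ∈ t, r' a b ↔ r (f a) (f b)) :
    TotalPreorderOn r' t where
  total a ha b hb := by
    rw [hr a ha b hb, hr b hb a ha]; exact h.total _ (hf a ha) _ (hf b hb)
  trans a ha b hb c hc := by
    rw [hr a ha b hb, hr b hb c hc, hr a ha c hc]; exact h.trans _ (hf a ha) _ (hf b hb) _ (hf c hc)

theorem exists_forall_rel (h : TotalPreorderOn r s) {l : List α} (hl : l ≠ [])
    (hls : ∀ a ∈ l, a ∈ s) : ∃ m ∈ l, ∀ a ∈ l, r a m := by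
  induction l with
  | nil => exact absurd rfl hl
  | cons a l ih =>
    simp only [forall_mem_cons] at hls
    have hrefl : r a a := (h.total a hls.1 a hls.1).elim id id
    rcases eq_or_ne l [] with rfl | hl'
    · exact ⟨a, mem_cons_self, by simpa using hrefl⟩
    obtain ⟨m, hm, hmax⟩ := ih hl' hls.2
    rcases h.total a hls.1 m (hls.2 m hm) with ham | hma
    · exact ⟨m, mem_cons_of_mem _ hm, forall_mem_cons.mpr ⟨ham, hmax⟩⟩
    · refine ⟨a, mem_cons_self, forall_mem_cons.mpr ⟨hrefl, fun b hb => ?_⟩⟩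
      exact h.trans b (hls.2 b hb) m (hls.2 m hm) a hls.1 (hmax b hb) hma

theorem lexLe {r : Word → Word → Prop} {s : Set Word} (h : TotalPreorderOn r s) :
    TotalPreorderOn (LexLe r) {X | ∀ x ∈ X, x ∈ s} where
  total X hX Y hY := by
    induction X generalizing Y with
    | nil => exact Or.inl (lexLe_nil_left Y)
    | cons x X ih =>
      cases Y with
      | nil => exact Or.inr (lexLe_nil_left _)
      | cons y Y =>
        simp only [Set.mem_ofPred_eq, forall_mem_cons] at hX hY
        simp only [lexLe_cons_cons]
        by_cases hxy : r x y <;> by_cases hyx : r y x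
        · exact (ih hX.2 Y hY.2).imp (fun h => ⟨hxy, fun _ => h⟩) (fun h => ⟨hyx, fun _ => h⟩)
        · exact Or.inl ⟨hxy, (absurd · hyx)⟩
        · exact Or.inr ⟨hyx, (absurd · hxy)⟩
        · exact ((h.total x hX.1 y hY.1).elim hxy hyx).elim
  trans X hX Y hY Z hZ := by
    induction X generalizing Y Z with
    | nil => exact fun _ _ => lexLe_nil_left Z
    | cons x X ih =>
      rcases Y with _ | ⟨y, Y⟩
      · exact fun hXY => absurd hXY not_lexLe_cons_nil
      rcases Z with _ | ⟨z, Z⟩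
      · exact fun _ hYZ => absurd hYZ not_lexLe_cons_nil
      simp only [Set.mem_ofPred_eq, forall_mem_cons] at hX hY hZ
      simp only [lexLe_cons_cons]
      rintro ⟨hxy, hXY⟩ ⟨hyz, hYZ⟩
      refine ⟨h.trans x hX.1 y hY.1 z hZ.1 hxy hyz, fun hzx => ?_⟩
      exact ih hX.2 Y hY.2 Z hZ.2 (hXY (h.trans y hY.1 z hZ.1 x hX.1 hyz hzx))
        (hYZ (h.trans z hZ.1 x hX.1 y hY.1 hzx hxy))

theorem exists_isLexMax {r : Word → Word → Prop} {s : Set Word} (h : TotalPreorderOn r s)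
    {xs : List Word} (hxs : ∀ x ∈ xs, x ∈ s) : ∃ M, IsLexMax r xs M := by
  obtain ⟨M, hM, hmax⟩ := h.lexLe.exists_forall_rel (l := xs.sublists) (ne_nil_of_mem
    (mem_sublists.mpr (nil_sublist xs))) fun X hX x hx => hxs x ((mem_sublists.mp hX).subset hx)
  exact ⟨M, mem_sublists.mp hM, fun N hN => hmax N (mem_sublists.mpr hN)⟩

end TotalPreorderOn

def LexMaxLe (r : Word → Word → Prop) (xs ys : List Word) : Prop :=
  ∀ MA MB, IsLexMax r xs MA → IsLexMax r ys MB → LexLe r MA MB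

section LexMax

variable {r r' : Word → Word → Prop} {x y : Word} {xs ys M : List Word} {s : Set Word}

theorem isLexMax_congr (h : ∀ a ∈ s, ∀ b ∈ s, r a b ↔ r' a b) (hxs : ∀ x ∈ xs, x ∈ s) :
    IsLexMax r xs M ↔ IsLexMax r' xs M :=
  and_congr_right fun hM => forall₂_congr fun _ hN =>
    lexLe_congr h (fun x hx => hxs x (hN.subset hx)) (fun x hx => hxs x (hM.subset hx))

theorem lexMaxLe_congr (h : ∀ a ∈ s, ∀ b ∈ s, r a b ↔ r' a b) (hxs : ∀ x ∈ xs, x ∈ s)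
    (hys : ∀ y ∈ ys, y ∈ s) : LexMaxLe r xs ys ↔ LexMaxLe r' xs ys := by
  refine forall₂_congr fun MA MB => ?_
  rw [isLexMax_congr h hxs, isLexMax_congr h hys]
  exact imp_congr_right fun hMA => imp_congr_right fun hMB =>
    lexLe_congr h (fun x hx => hxs x (hMA.1.subset hx)) (fun y hy => hys y (hMB.1.subset hy))

theorem TotalPreorderOn.lexMaxLe_iff (h : TotalPreorderOn r s) {MA MB : List Word}
    (hxs : ∀ x ∈ xs, x ∈ s) (hys : ∀ y ∈ ys, y ∈ s)
    (hMA : IsLexMax r xs MA) (hMB : IsLexMax r ys MB) : LexMaxLe r xs ys ↔ LexLe r MA MB := by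
  refine ⟨fun hle => hle MA MB hMA hMB, fun hAB MA' MB' hMA' hMB' => ?_⟩
  have sub : ∀ {N zs : List Word}, N <+ zs → (∀ z ∈ zs, z ∈ s) → ∀ z ∈ N, z ∈ s :=
    fun hN hzs z hz => hzs z (hN.subset hz)
  have hlex := h.lexLe
  exact hlex.trans _ (sub hMA'.1 hxs) _ (sub hMB.1 hys) _ (sub hMB'.1 hys)
    (hlex.trans _ (sub hMA'.1 hxs) _ (sub hMA.1 hxs) _ (sub hMB.1 hys) (hMA.2 MA' hMA'.1) hAB)
    (hMB'.2 MB hMB.1)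

theorem isLexMax_singleton_iff (hx : r x x) : IsLexMax r [x] M ↔ M = [x] := by
  constructor
  · rintro ⟨hM, hmax⟩
    rcases sublist_singleton.mp hM with rfl | rfl
    · exact absurd (hmax [x] (Sublist.refl _)) not_lexLe_cons_nil
    · rfl
  · rintro rfl
    refine ⟨Sublist.refl _, fun N hN => ?_⟩
    rcases sublist_singleton.mp hN with rfl | rfl
    · exact lexLe_nil_left _
    · exact lexLe_singleton_singleton.mpr hx

theorem lexMaxLe_singleton_iff (hx : r x x) (hy : r y y) : LexMaxLe r [x] [y] ↔ r x y := by
  simp [LexMaxLe, isLexMax_singleton_iff hx, isLexMax_singleton_iff hy]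

end LexMax

def wordsOver (T : Finset ℕ) : Set Word := {w | ∀ a ∈ w, a ∈ T}

theorem mem_and_ne_of_mem_splitOn {m a : ℕ} :
    ∀ {l x : List ℕ}, x ∈ l.splitOn m → a ∈ x → a ∈ l ∧ a ≠ m
  | [], x, hx, ha => by simp_all
  | b :: l, x, hx, ha => by
    rw [splitOn_cons_eq_if_modifyHead] at hx
    split_ifs at hx with hbm
    · rcases mem_cons.mp hx with rfl | hx
      · simp at ha
      · exact (mem_and_ne_of_mem_splitOn hx ha).imp_left (mem_cons_of_mem b)
    · obtain ⟨hd, tl, hsplit⟩ := exists_cons_of_ne_nil (splitOn_ne_nil m l)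
      rw [hsplit, modifyHead_cons, mem_cons] at hx
      rcases hx with rfl | hx
      · rcases mem_cons.mp ha with rfl | ha
        · exact ⟨mem_cons_self, by simpa using hbm⟩
        · exact (mem_and_ne_of_mem_splitOn (hsplit ▸ mem_cons_self) ha).imp_left
            (mem_cons_of_mem b)
      · exact (mem_and_ne_of_mem_splitOn (hsplit ▸ mem_cons_of_mem hd hx) ha).imp_left
          (mem_cons_of_mem b)

theorem mem_wordsOver_erase_of_mem_splitOn {T : Finset ℕ} {A x : Word} {m : ℕ}
    (hA : A ∈ wordsOver T) (hx : x ∈ A.splitOn m) : x ∈ wordsOver (T.erase m) := fun a ha =>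
  have ⟨haA, ham⟩ := mem_and_ne_of_mem_splitOn hx ha
  Finset.mem_erase.mpr ⟨ham, hA a haA⟩

section Wle

variable {A B : Word}

theorem leAux_succ_iff {f : ℕ} : leAux (f + 1) A B ↔ (A = [] ∧ B = []) ∨
    ∀ m, (A ++ B).min? = some m → LexMaxLe (leAux f) (A.splitOn m) (B.splitOn m) :=
  Iff.rfl

theorem leAux_succ_iff_leAux {T : Finset ℕ} {f : ℕ} (hf : T.card < f) (hA : A ∈ wordsOver T)
    (hB : B ∈ wordsOver T) : leAux (f + 1) A B ↔ leAux f A B := by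
  induction f generalizing T A B with
  | zero => omega
  | succ f ih =>
    rw [leAux_succ_iff, leAux_succ_iff (f := f)]
    refine or_congr_right (forall₂_congr fun m hm => ?_)
    have hmT : m ∈ T := (mem_append.mp (min?_mem hm)).elim (hA m) (hB m)
    have hcard : (T.erase m).card < f := by have := Finset.card_erase_lt_of_mem hmT; omega
    exact lexMaxLe_congr (fun x hx y hy => ih hcard hx hy)
      (fun x hx => mem_wordsOver_erase_of_mem_splitOn hA hx)
      (fun y hy => mem_wordsOver_erase_of_mem_splitOn hB hy)

theorem leAux_iff_leAux {T : Finset ℕ} {f g : ℕ} (hf : T.card < f) (hg : T.card < g)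
    (hA : A ∈ wordsOver T) (hB : B ∈ wordsOver T) : leAux f A B ↔ leAux g A B := by
  have stable : ∀ n, T.card < n → (leAux n A B ↔ leAux (T.card + 1) A B) := by
    intro n hn
    induction n, hn using Nat.le_induction with
    | base => rfl
    | succ n hn ih => exact (leAux_succ_iff_leAux hn hA hB).trans ih
  exact (stable f hf).trans (stable g hg).symm

theorem Wle_iff_leAux {T : Finset ℕ} {f : ℕ} (hA : A ∈ wordsOver T) (hB : B ∈ wordsOver T)
    (hf : T.card < f) : Wle A B ↔ leAux f A B := by
  have hsub : (A ++ B).toFinset ⊆ T := fun a ha =>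
    (mem_append.mp (mem_toFinset.mp ha)).elim (hA a) (hB a)
  exact leAux_iff_leAux (T := (A ++ B).toFinset)
    (lt_of_le_of_lt (toFinset_card_le _) (by simp)) ((Finset.card_le_card hsub).trans_lt hf)
    (fun a ha => mem_toFinset.mpr (mem_append_left _ ha))
    (fun a ha => mem_toFinset.mpr (mem_append_right _ ha))

theorem Wle_refl (A : Word) : Wle A A :=
  Or.inr fun _ _ _ _ hMA hMB => hMB.2 _ hMA.1

instance : Std.Refl Wle := ⟨Wle_refl⟩

theorem Wle_iff_lexMaxLe_of_min?_eq_some {m : ℕ} (hm : (A ++ B).min? = some m) :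
    Wle A B ↔ LexMaxLe Wle (A.splitOn m) (B.splitOn m) := by
  set T := (A ++ B).toFinset
  have hA : A ∈ wordsOver T := fun a ha => mem_toFinset.mpr (mem_append_left _ ha)
  have hB : B ∈ wordsOver T := fun a ha => mem_toFinset.mpr (mem_append_right _ ha)
  have hmT : m ∈ T := mem_toFinset.mpr (min?_mem hm)
  have hne : ¬ (A = [] ∧ B = []) := by rintro ⟨rfl, rfl⟩; simp at hm
  rw [Wle_iff_leAux hA hB (Nat.lt_succ_self _), leAux_succ_iff, or_iff_right hne]
  simp only [hm, Option.some.injEq, forall_eq']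
  exact (lexMaxLe_congr (fun x hx y hy => Wle_iff_leAux hx hy (Finset.card_erase_lt_of_mem hmT))
    (fun x hx => mem_wordsOver_erase_of_mem_splitOn hA hx)
    (fun y hy => mem_wordsOver_erase_of_mem_splitOn hB hy)).symm

theorem Wle_iff_lexMaxLe {μ : ℕ} (hμ : ∀ a ∈ A ++ B, μ ≤ a) :
    Wle A B ↔ LexMaxLe Wle (A.splitOn μ) (B.splitOn μ) := by
  by_cases h : μ ∈ A ++ B
  · exact Wle_iff_lexMaxLe_of_min?_eq_some (min?_eq_some_iff.mpr ⟨h, hμ⟩)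
  · rw [mem_append, not_or] at h
    rw [splitOn_eq_singleton h.1, splitOn_eq_singleton h.2,
      lexMaxLe_singleton_iff (Wle_refl A) (Wle_refl B)]

end Wle

theorem totalPreorderOn_wordsOver (T : Finset ℕ) : TotalPreorderOn Wle (wordsOver T) := by
  induction T using Finset.strongInduction with
  | H T ih =>
  rcases T.eq_empty_or_nonempty with rfl | hT
  · have hnil : ∀ A ∈ wordsOver ∅, A = [] := fun A hA =>
      eq_nil_iff_forall_not_mem.mpr fun a ha => by simpa using hA a ha
    exact .of_subsingleton (fun A hA B hB => (hnil A hA).trans (hnil B hB).symm)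
      fun A _ => Wle_refl A
  set μ := T.min' hT
  have hblocks : TotalPreorderOn Wle (wordsOver (T.erase μ)) :=
    ih _ (Finset.erase_ssubset (T.min'_mem hT))
  have hsplit : ∀ A ∈ wordsOver T, ∀ x ∈ A.splitOn μ, x ∈ wordsOver (T.erase μ) :=
    fun A hA x hx => mem_wordsOver_erase_of_mem_splitOn hA hx
  choose! blockMax hblockMax using fun A hA => hblocks.exists_isLexMax (hsplit A hA)
  refine hblocks.lexLe.comap (f := blockMax)
    (fun A hA x hx => hsplit A hA x ((hblockMax A hA).1.subset hx)) fun A hA B hB => ?_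
  rw [Wle_iff_lexMaxLe (μ := μ) fun a ha => (mem_append.mp ha).elim
    (fun h => T.min'_le a (hA a h)) (fun h => T.min'_le a (hB a h))]
  exact hblocks.lexMaxLe_iff (hsplit A hA) (hsplit B hB) (hblockMax A hA) (hblockMax B hB)

instance : Std.Total Wle where
  total A B := (totalPreorderOn_wordsOver (A ++ B).toFinset).total
    A (fun _ ha => by simp [ha]) B (fun _ hb => by simp [hb])

instance : IsTrans Word Wle where
  trans A B C := (totalPreorderOn_wordsOver (A ++ B ++ C).toFinset).trans
    A (fun _ ha => by simp [ha]) B (fun _ hb => by simp [hb]) C (fun _ hc => by simp [hc])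

theorem List.Pairwise.rel_getElem_of_le {r : Word → Word → Prop} [Std.Refl r] {L : List Word}
    (h : L.Pairwise fun x y => r y x) {i j : ℕ} (hij : i ≤ j) (hj : j < L.length) :
    r L[j] (L[i]'(hij.trans_lt hj)) := by
  rcases hij.eq_or_lt with rfl | hij
  · exact refl_of r _
  · exact pairwise_iff_getElem.mp h i j _ hj hij

section TotalPreorder

variable {r : Word → Word → Prop} [Std.Total r] [IsTrans Word r]

theorem totalPreorderOn_univ : TotalPreorderOn r Set.univ where
  total a _ b _ := total_of r a b
  trans _ _ _ _ _ _ := trans_of r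

instance : Std.Total (LexLe r) where
  total X Y := totalPreorderOn_univ.lexLe.total X (fun _ _ => trivial) Y (fun _ _ => trivial)

instance : IsTrans (List Word) (LexLe r) where
  trans X Y Z := totalPreorderOn_univ.lexLe.trans X (fun _ _ => trivial) Y (fun _ _ => trivial)
    Z (fun _ _ => trivial)

theorem pairwise_of_forall_sublist_lexLe {M : List Word} (h : ∀ N, N <+ M → LexLe r N M) :
    M.Pairwise fun x y => r y x := by
  have : Trans (fun x y => r y x) (fun x y => r y x) (fun x y => r y x) :=
    ⟨fun hab hbc => trans_of r hbc hab⟩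
  refine isChain_iff_pairwise.mp (isChain_iff_forall_rel_of_append_cons_cons.mpr ?_)
  rintro a b l₁ l₂ rfl
  have hsub : l₁ ++ b :: l₂ <+ l₁ ++ a :: b :: l₂ := (sublist_cons_self a _).append_left l₁
  exact (lexLe_cons_cons.mp (lexLe_append_left.mp (h _ hsub))).1

theorem lexLe_cons_append_of_forall_rel {b : Word} {B P : List Word}
    (hB : (b :: B).Pairwise fun x y => r y x) (hP : ∀ p ∈ P, r b p) :
    LexLe r (b :: B) (P ++ b :: B) := by
  refine lexLe_of_forall_getElem (by simp) fun i hi => ?_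
  by_cases hiP : i < P.length
  · rw [getElem_append_left hiP]
    exact trans_of r (hB.rel_getElem_of_le (Nat.zero_le i) hi) (hP _ (getElem_mem hiP))
  · rw [getElem_append_right (not_lt.mp hiP)]
    exact hB.rel_getElem_of_le (Nat.sub_le i P.length) hi

theorem lexLe_append_take {X M B : List Word} {b : Word} {k : ℕ} (hXM : LexLe r X M)
    (hB : (b :: B).Pairwise fun x y => r y x) (hle : ∀ m ∈ M.take k, r b m)
    (hlt : ∀ m ∈ M[k]?, ¬ r b m) : LexLe r (X ++ b :: B) (M.take k ++ b :: B) := by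
  induction k generalizing X M with
  | zero =>
    rcases X with _ | ⟨x, X⟩
    · exact refl_of (LexLe r) _
    rcases M with _ | ⟨m, M⟩
    · exact absurd hXM not_lexLe_cons_nil
    simp only [getElem?_cons_zero, Option.mem_def, Option.some.injEq, forall_eq'] at hlt
    have hxm := (lexLe_cons_cons.mp hXM).1
    have hmb : r m b := (total_of r m b).resolve_right hlt
    exact lexLe_cons_cons.mpr ⟨trans_of r hxm hmb, fun hbx => absurd (trans_of r hbx hxm) hlt⟩
  | succ k ih =>
    rcases M with _ | ⟨m, M⟩
    · rcases X with _ | ⟨x, X⟩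
      · exact refl_of (LexLe r) _
      · exact absurd hXM not_lexLe_cons_nil
    rw [take_succ_cons] at hle ⊢
    rw [getElem?_cons_succ] at hlt
    rcases X with _ | ⟨x, X⟩
    · exact lexLe_cons_append_of_forall_rel hB hle
    obtain ⟨hxm, hXM⟩ := lexLe_cons_cons.mp hXM
    exact lexLe_cons_cons.mpr
      ⟨hxm, fun hmx => ih (hXM hmx) (fun m' hm' => hle m' (mem_cons_of_mem m hm')) hlt⟩

end TotalPreorder

section PrefixLength

/- For `P` downward closed on `[0, n)`, `sSup {i | 1 ≤ i ∧ i ≤ n ∧ P (i - 1)}` is the length of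
the longest initial segment of `[0, n)` on which `P` holds (`sSup ∅ = 0` covers the empty one). -/

variable {P : ℕ → Prop} {n : ℕ}

theorem of_lt_sSup_prefix (hP : ∀ i j, i ≤ j → j < n → P j → P i) {i : ℕ}
    (hi : i < sSup {i | 1 ≤ i ∧ i ≤ n ∧ P (i - 1)}) : P i := by
  set S := {i | 1 ≤ i ∧ i ≤ n ∧ P (i - 1)}
  have hS : S.Nonempty := by
    by_contra hS
    rw [Set.not_nonempty_iff_eq_empty.mp hS, csSup_empty] at hi
    exact Nat.not_lt_zero i hi
  obtain ⟨h1, hn, hP'⟩ := Nat.sSup_mem hS ⟨n, fun j hj => hj.2.1⟩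
  exact hP i _ (Nat.le_sub_one_of_lt hi) (by omega) hP'

theorem not_sSup_prefix (hn : sSup {i | 1 ≤ i ∧ i ≤ n ∧ P (i - 1)} < n) :
    ¬ P (sSup {i | 1 ≤ i ∧ i ≤ n ∧ P (i - 1)}) := fun hP => by
  have := le_csSup (s := {i | 1 ≤ i ∧ i ≤ n ∧ P (i - 1)})
    (a := sSup {i | 1 ≤ i ∧ i ≤ n ∧ P (i - 1)} + 1) ⟨n, fun j hj => hj.2.1⟩
    ⟨by omega, by omega, by simpa using hP⟩
  omega

end PrefixLength

section IndexColl

variable {L L₁ L₂ : List Word} {s t : List ℕ} {m n : ℕ}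

theorem IndexColl.take (h : IndexColl n s) (k : ℕ) : IndexColl n (s.take k) :=
  ⟨h.1.take k, fun i hi => h.2 i (mem_of_mem_take hi)⟩

theorem IndexColl.append_map_add (hs : IndexColl m s) (ht : IndexColl n t) :
    IndexColl (m + n) (s ++ t.map (· + m)) := by
  refine ⟨isChain_append.mpr ⟨hs.1, isChain_map_of_isChain _ (fun _ _ h => by omega) ht.1, ?_⟩, ?_⟩
  · intro i hi j hj
    obtain ⟨j', hj', rfl⟩ := mem_map.mp (mem_of_mem_head? hj)
    have := hs.2 i (mem_of_mem_getLast? hi)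
    have := ht.2 j' hj'
    omega
  · intro i hi
    rcases mem_append.mp hi with hi | hi
    · have := hs.2 i hi; omega
    · obtain ⟨j, hj, rfl⟩ := mem_map.mp hi
      have := ht.2 j hj; omega

theorem getElem_subseqOf {i : ℕ} (hi : i < (SubseqOf L s).length) :
    (SubseqOf L s)[i] = L.getD (s.getD i 0 - 1) [] := by
  have hi' : i < s.length := by simpa [SubseqOf] using hi
  simp [SubseqOf, getElem?_eq_getElem hi']

theorem subseqOf_take (k : ℕ) : SubseqOf L (s.take k) = (SubseqOf L s).take k :=
  map_take ..

theorem subseqOf_append_map_add (hs : IndexColl L₁.length s) (ht : IndexColl L₂.length t) :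
    SubseqOf (L₁ ++ L₂) (s ++ t.map (· + L₁.length)) = SubseqOf L₁ s ++ SubseqOf L₂ t := by
  simp only [SubseqOf, map_append, map_map]
  congr 1
  · refine map_congr_left fun i hi => getD_append _ _ _ _ ?_
    have := hs.2 i hi; omega
  · refine map_congr_left fun j hj => ?_
    have := ht.2 j hj
    simp only [Function.comp_apply]
    rw [getD_append_right _ _ _ _ (by omega)]
    congr 1; omega

theorem IndexColl.subseqOf_sublist (h : IndexColl L.length s) : SubseqOf L s <+ L := by
  have hlt : ∀ i ∈ s, i - 1 < L.length := fun i hi => by have := h.2 i hi; omega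
  have hpw : (s.pmap (fun i hi => (⟨i - 1, hi⟩ : Fin L.length)) hlt).Pairwise (· < ·) := by
    refine (pairwise_pmap hlt).mpr ((isChain_iff_pairwise.mp h.1).imp_of_mem ?_)
    intro i j hi hj hij _ _
    have := h.2 i hi
    simp only [Fin.mk_lt_mk]; omega
  convert map_getElem_sublist hpw using 1
  rw [map_pmap, SubseqOf, ← pmap_eq_map hlt]
  exact pmap_congr_left _ fun i _ hi _ => getD_eq_getElem _ _ hi

theorem IsMaxColl.subseqOf_ne_nil (h : IsMaxColl L s) (hL : L ≠ []) : SubseqOf L s ≠ [] := by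
  intro hnil
  obtain ⟨x, hx⟩ := exists_mem_of_ne_nil L hL
  exact not_lexLe_cons_nil (hnil ▸ h.2 [x] (singleton_sublist.mpr hx))

theorem IsMaxColl.pairwise (h : IsMaxColl L s) : (SubseqOf L s).Pairwise fun x y => Wle y x :=
  pairwise_of_forall_sublist_lexLe fun N hN => h.2 N (hN.trans h.1.subseqOf_sublist)

theorem IsMaxColl.wle_of_mem_take_sSup (h : IsMaxColl L s) {b : Word} :
    ∀ m ∈ (SubseqOf L s).take
      (sSup {i | 1 ≤ i ∧ i ≤ s.length ∧ Wle b (L.getD (s.getD (i - 1) 0 - 1) [])}), Wle b m := by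
  intro m hm
  obtain ⟨i, hi, rfl⟩ := mem_take_iff_getElem.mp hm
  have hlen : (SubseqOf L s).length = s.length := length_map ..
  rw [getElem_subseqOf]
  refine of_lt_sSup_prefix (P := fun i => Wle b (L.getD (s.getD i 0 - 1) []))
    (fun i j hij hj hPj => ?_) (lt_min_iff.mp hi).1
  rw [← getElem_subseqOf (by omega)] at hPj ⊢
  exact trans_of Wle hPj (h.pairwise.rel_getElem_of_le hij (by omega))

theorem not_wle_of_mem_getElem?_sSup {b : Word} :
    ∀ m ∈ (SubseqOf L s)[sSup {i | 1 ≤ i ∧ i ≤ s.length ∧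
      Wle b (L.getD (s.getD (i - 1) 0 - 1) [])}]?, ¬ Wle b m := by
  intro m hm
  obtain ⟨hk, rfl⟩ := List.getElem?_eq_some_iff.mp hm
  have hlen : (SubseqOf L s).length = s.length := length_map ..
  rw [getElem_subseqOf]
  exact not_sSup_prefix (P := fun i => Wle b (L.getD (s.getD i 0 - 1) [])) (by omega)

end IndexColl

theorem concatenation_maximal_index_collection_general
    (LA LB : List Word) (hB : LB ≠ [])
    (gs hs : List ℕ) (hgs : IsMaxColl LA gs) (hhs : IsMaxColl LB hs) :
    IsMaxColl (LA ++ LB)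
      (gs.take (sSup {i | 1 ≤ i ∧ i ≤ gs.length ∧
          Wle (LB.getD (hs.getD 0 0 - 1) []) (LA.getD (gs.getD (i-1) 0 - 1) [])})
        ++ hs.map (· + LA.length)) := by
  obtain ⟨b, B, hbB⟩ := exists_cons_of_ne_nil (hhs.subseqOf_ne_nil hB)
  have hb : LB.getD (hs.getD 0 0 - 1) [] = b := by
    simpa [hbB] using (getElem_subseqOf (L := LB) (s := hs) (i := 0) (by simp [hbB])).symm
  rw [hb]
  set k := sSup {i | 1 ≤ i ∧ i ≤ gs.length ∧ Wle b (LA.getD (gs.getD (i-1) 0 - 1) [])}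
  refine ⟨length_append ▸ (hgs.1.take k).append_map_add hhs.1, fun N hN => ?_⟩
  rw [subseqOf_append_map_add (hgs.1.take k) hhs.1, subseqOf_take, hbB]
  obtain ⟨N₁, N₂, rfl, hN₁, hN₂⟩ := sublist_append_iff.mp hN
  exact trans_of (LexLe Wle) (lexLe_append_left.mpr (hbB ▸ hhs.2 N₂ hN₂))
    (lexLe_append_take (hgs.2 N₁ hN₁) (hbB ▸ hhs.pairwise) hgs.wle_of_mem_take_sSup
      not_wle_of_mem_getElem?_sSup)

theorem concatenation_maximal_index_collection
    (LA LB : List Word) (hA : LA ≠ []) (hB : LB ≠ [])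
    (gs hs : List ℕ) (hgs : IsMaxColl LA gs) (hhs : IsMaxColl LB hs) :
    IsMaxColl (LA ++ LB)
      (gs.take (sSup {i | 1 ≤ i ∧ i ≤ gs.length ∧
          Wle (LB.getD (hs.getD 0 0 - 1) []) (LA.getD (gs.getD (i-1) 0 - 1) [])})
        ++ hs.map (· + LA.length)) :=
  concatenation_maximal_index_collection_general LA LB hB gs hs hgs hhs
end

section
/- An ordinal α is closed under ψ (meaning ψ(β) < α for every β < α) if and only if α = 0 or α = ω^(ω·β) for some ordinal β > 0. -/
open scoped Classical

/-! Since `ψ` only raises the exponent of the last Cantor-normal-form term by one,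
`ψ (ω ^ e) = ω ^ (e + 1)` and `ψ γ < ω ^ (log γ + 2)`. So `ω ^ L` is closed under `ψ` when
`L` is a limit ordinal. Conversely, a closed `α ≠ 0` equals `ω ^ log α`, as otherwise
`ψ (ω ^ log α) = ω ^ (log α + 1) > α`; and `log α` is neither `0` (as `ψ 0 = ω`) nor a
successor `e + 1` (as then `ψ (ω ^ e) = α`). Limit ordinals are the positive multiples of `ω`. -/

open Ordinal Order

lemma Ordinal.IsPrincipal.foldr_add_lt {ι : Type*} {o : Ordinal}
    (ho : IsPrincipal (· + ·) o) (ho0 : 0 < o) (f : ι → Ordinal) (l : List ι)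
    (h : ∀ i ∈ l, f i < o) :
    l.foldr (fun i r => f i + r) 0 < o := by
  induction l with
  | nil => exact ho0
  | cons i l ih =>
    exact ho (h i List.mem_cons_self) (ih fun j hj => h j (List.mem_cons_of_mem i hj))

lemma CNF_omega0_opow (e : Ordinal) : CNF ω (ω ^ e) = [(e, 1)] := by
  simpa using CNF.opow_mul_add (e := e) (y := 0) one_lt_omega0 one_ne_zero one_lt_omega0
    (opow_pos e omega0_pos)

lemma psi_zero : psi 0 = ω := by
  simp [psi, CNF.zero_right]

lemma psi_eq_of_getLast?_eq_some {γ : Ordinal} {p : Ordinal × Ordinal}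
    (h : (CNF ω γ).getLast? = some p) :
    psi γ = (CNF ω γ).dropLast.foldr (fun q r => ω ^ q.1 * q.2 + r) 0
      + (ω ^ p.1 * (p.2 - 1) + ω ^ (p.1 + 1)) := by
  rw [psi, h]

lemma psi_omega0_opow (e : Ordinal) : psi (ω ^ e) = ω ^ (e + 1) := by
  rw [psi_eq_of_getLast?_eq_some (p := (e, 1)) (by rw [CNF_omega0_opow]; rfl), CNF_omega0_opow]
  simp

lemma psi_lt_omega0_opow_log_add_two {γ : Ordinal} (hγ : γ ≠ 0) :
    psi γ < ω ^ (log ω γ + 1 + 1) := by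
  have hprin := isPrincipal_add_omega0_opow (log ω γ + 1 + 1)
  have hlog_lt : log ω γ < log ω γ + 1 + 1 := (lt_add_one _).trans (lt_add_one _)
  have hterm : ∀ q ∈ CNF ω γ, ω ^ q.1 * q.2 < ω ^ (log ω γ + 1 + 1) := fun q hq =>
    opow_mul_lt_opow (CNF.snd_lt one_lt_omega0 hq) ((CNF.fst_le_log hq).trans_lt hlog_lt)
  obtain ⟨p, hp⟩ := Option.isSome_iff_exists.mp
    (List.getLast?_isSome.mpr (show CNF ω γ ≠ [] by simp [CNF.ne_zero hγ]))
  have hpmem : p ∈ CNF ω γ := List.mem_of_getLast? hp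
  rw [psi_eq_of_getLast?_eq_some hp]
  refine hprin (hprin.foldr_add_lt (opow_pos _ omega0_pos) _ _ fun q hq =>
    hterm q ((List.dropLast_sublist _).subset hq)) (hprin ?_ ?_)
  · exact (mul_le_mul_right (Ordinal.sub_le_self _ _) _).trans_lt (hterm p hpmem)
  · refine (opow_lt_opow_iff_right one_lt_omega0).2 ?_
    grw [CNF.fst_le_log hpmem]
    exact lt_add_one _

lemma psi_lt_omega0_opow_of_isSuccLimit {L γ : Ordinal} (hL : IsSuccLimit L) (hγ : γ < ω ^ L) :
    psi γ < ω ^ L := by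
  rcases eq_or_ne γ 0 with rfl | hγ0
  · simpa [psi_zero] using left_lt_opow one_lt_omega0 (one_lt_of_isSuccLimit hL)
  · have hlog : log ω γ < L := (lt_opow_iff_log_lt one_lt_omega0 hγ0).mp hγ
    exact (psi_lt_omega0_opow_log_add_two hγ0).trans_le
      (opow_le_opow_right omega0_pos (hL.add_one_lt (hL.add_one_lt hlog)).le)

section PsiClosed

variable {α : Ordinal} (hα : α ≠ 0) (hψ : ∀ β < α, psi β < α)
include hα hψ

lemma eq_omega0_opow_log_of_psi_closed : α = ω ^ log ω α := by
  refine ((opow_log_le_self ω hα).eq_of_not_lt fun hlt => ?_).symm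
  have h := hψ _ hlt
  rw [psi_omega0_opow, ← succ_eq_add_one] at h
  exact h.not_gt (lt_opow_succ_log_self one_lt_omega0 α)

lemma isSuccLimit_log_of_psi_closed : IsSuccLimit (log ω α) := by
  have hα_eq := eq_omega0_opow_log_of_psi_closed hα hψ
  rcases zero_or_succ_or_isSuccLimit (log ω α) with hL | ⟨f, hf⟩ | hL
  · have h := hψ 0 (pos_iff_ne_zero.2 hα)
    rw [psi_zero, hα_eq, hL, opow_zero] at h
    exact absurd h one_lt_omega0.not_gt
  · have h := hψ (ω ^ f) <| by
      rw [hα_eq, ← hf]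
      exact (opow_lt_opow_iff_right one_lt_omega0).2 (lt_succ f)
    rw [psi_omega0_opow, ← succ_eq_add_one, hf, ← hα_eq] at h
    exact absurd h (lt_irrefl α)
  · exact hL

end PsiClosed

theorem psi_closed_iff (α : Ordinal) :
    (∀ β < α, psi β < α) ↔
      (α = 0 ∨ ∃ β : Ordinal, 0 < β ∧ α = Ordinal.omega0 ^ (Ordinal.omega0 * β)) := by
  constructor
  · intro hψ
    refine or_iff_not_imp_left.2 fun hα => ?_
    have hL := isSuccLimit_log_of_psi_closed hα hψ
    obtain ⟨β, hβ⟩ := isSuccPrelimit_iff_omega0_dvd.1 hL.isSuccPrelimit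
    refine ⟨β, pos_iff_ne_zero.2 fun hβ0 => ?_, ?_⟩
    · rw [hβ, hβ0, mul_zero] at hL
      exact not_isSuccLimit_zero hL
    · rw [← hβ]
      exact eq_omega0_opow_log_of_psi_closed hα hψ
  · rintro (rfl | ⟨β, hβ, rfl⟩)
    · simp
    · exact fun γ =>
        psi_lt_omega0_opow_of_isSuccLimit (isSuccLimit_mul_left isSuccLimit_omega0 hβ)
end

section
/- The transitive closure of the relation R on the ordinals below ε₀ is the standard strict order <. That is, for all α, β < ε₀: α < β if and only if there is a finite chain α = γ_0 R γ_1 R ... R γ_m = β with m ≥ 1. -/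
open scoped Classical

/-!
Every `R`-step goes up, because `β[n] < β` for limits `β < ε₀`. Conversely, the fundamental
sequence of such a limit `β = γ + ω ^ e` is cofinal in it: `ω ^ e` is the supremum of
`ω ^ e' * (n + 1)` when `e = e' + 1`, and of `ω ^ e[n]` when `e` is a limit, by induction on `β`
since `e < β` (this is where `β < ε₀` enters: it rules out `e = β`). Hence every `α < β` lies
below some `R`-predecessor of `β`, and well-founded induction on `β` builds the chain.
-/

open Ordinal Order

universe u

noncomputable def cnfInit (β : Ordinal) : Ordinal :=
  (CNF ω β).dropLast.foldr (fun q r => ω ^ q.1 * q.2 + r) 0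

lemma foldr_opow_mul_add (L : List (Ordinal × Ordinal)) (x : Ordinal) :
    L.foldr (fun q r => ω ^ q.1 * q.2 + r) x = L.foldr (fun q r => ω ^ q.1 * q.2 + r) 0 + x := by
  induction L with
  | nil => simp
  | cons q L ih => simp [ih, add_assoc]

lemma exists_CNF_getLast {β : Ordinal} (hβ : β ≠ 0) :
    ∃ e, ∃ m : ℕ, (CNF ω β).getLast? = some (e, (m : Ordinal) + 1) ∧
      β = cnfInit β + ω ^ e * m + ω ^ e := by
  obtain ⟨⟨e, c⟩, hlast⟩ : ∃ p, (CNF ω β).getLast? = some p :=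
    ⟨_, List.getLast?_eq_some_getLast (by rw [CNF.ne_zero hβ]; exact List.cons_ne_nil _ _)⟩
  have hmem := List.mem_of_getLast? hlast
  obtain ⟨k, rfl⟩ := lt_omega0.1 (CNF.snd_lt one_lt_omega0 hmem)
  obtain ⟨m, rfl⟩ : ∃ m, k = m + 1 := Nat.exists_eq_add_one.2 (by simpa using CNF.snd_pos hmem)
  refine ⟨e, m, by rw [hlast]; push_cast; rfl, ?_⟩
  conv_lhs => rw [← CNF.foldr ω β, ← List.dropLast_append_getLast? _ hlast]
  rw [List.foldr_append, List.foldr_cons, List.foldr_nil, foldr_opow_mul_add]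
  push_cast
  rw [mul_add_one, add_zero, add_assoc, cnfInit]

lemma natCast_add_one_sub_one (m : ℕ) : (m : Ordinal.{u}) + 1 - 1 = m := by
  exact_mod_cast natCast_sub.{u} (m + 1) 1

lemma fundSeq_of_getLast_add_one {β e : Ordinal} {m : ℕ}
    (h : (CNF ω β).getLast? = some (e + 1, (m : Ordinal) + 1)) (n : ℕ) :
    fundSeq β n = cnfInit β + ω ^ (e + 1) * m + ω ^ e * (n + 1) := by
  have hx : ∃ e', e + 1 = e' + 1 := ⟨e, rfl⟩
  have hch : hx.choose = e :=
    (succ_injective (by simpa only [succ_eq_add_one] using hx.choose_spec)).symm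
  rw [fundSeq, h]
  simp only [add_eq_zero_iff, one_ne_zero, and_false, if_false, dif_pos hx, hch,
    natCast_add_one_sub_one]
  rfl

lemma fundSeq_of_getLast_isSuccLimit {β e : Ordinal} {m : ℕ}
    (h : (CNF ω β).getLast? = some (e, (m : Ordinal) + 1)) (he : IsSuccLimit e) (heβ : e < β)
    (n : ℕ) :
    fundSeq β n = cnfInit β + ω ^ e * m + ω ^ fundSeq e n := by
  have hx : ¬ ∃ e', e = e' + 1 := fun ⟨e', he'⟩ => not_isSuccLimit_add_one e' (he' ▸ he)
  rw [fundSeq, h]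
  simp only [if_neg he.pos.ne', dif_neg hx, dif_pos heβ, natCast_add_one_sub_one]
  rfl

lemma lt_opow_self_of_lt_eps0 {β : Ordinal} (hβ : β < eps0) : β < ω ^ β := by
  refine (right_le_opow β one_lt_omega0).lt_of_ne fun h => hβ.not_ge (ciSup_le fun n => ?_)
  induction n with
  | zero => rw [omegaTower, h]; exact one_le_iff_ne_zero.2 (opow_ne_zero _ omega0_ne_zero)
  | succ n ih => exact (opow_le_opow_right omega0_pos ih).trans_eq h.symm

lemma fundSeq_cases {β : Ordinal} (hβ : IsSuccLimit β) (hβε : β < eps0) :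
    ∃ γ e, β = γ + ω ^ e ∧ e < β ∧
      ((∃ e', e = e' + 1 ∧ ∀ n : ℕ, fundSeq β n = γ + ω ^ e' * (n + 1)) ∨
        (IsSuccLimit e ∧ ∀ n : ℕ, fundSeq β n = γ + ω ^ fundSeq e n)) := by
  obtain ⟨e, m, hlast, hβeq⟩ := exists_CNF_getLast hβ.pos.ne'
  have hopow : ω ^ e ≤ β := hβeq ▸ le_add_self
  have heβ : e < β :=
    (lt_opow_self_of_lt_eps0 (((right_le_opow e one_lt_omega0).trans hopow).trans_lt hβε)).trans_le
      hopow
  refine ⟨_, e, hβeq, heβ, ?_⟩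
  rcases zero_or_succ_or_isSuccLimit e with rfl | ⟨e', rfl⟩ | he
  · rw [opow_zero] at hβeq
    exact absurd (hβeq ▸ hβ) (not_isSuccLimit_add_one _)
  · rw [succ_eq_add_one] at hlast ⊢
    exact Or.inl ⟨e', rfl, fundSeq_of_getLast_add_one hlast⟩
  · exact Or.inr ⟨he, fundSeq_of_getLast_isSuccLimit hlast he heβ⟩

lemma fundSeq_lt_self {β : Ordinal} (hβ : IsSuccLimit β) (hβε : β < eps0) (n : ℕ) :
    fundSeq β n < β := by
  induction β using WellFoundedLT.induction with
  | ind β IH =>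
  obtain ⟨γ, e, hβeq, heβ, ⟨e', rfl, hfs⟩ | ⟨he, hfs⟩⟩ := fundSeq_cases hβ hβε
  · rw [hfs, hβeq, opow_add, opow_one, add_lt_add_iff_left,
      mul_lt_mul_iff_right₀ (opow_pos _ omega0_pos)]
    exact_mod_cast natCast_lt_omega0 (n + 1)
  · rw [hfs, hβeq, add_lt_add_iff_left, opow_lt_opow_iff_right one_lt_omega0]
    exact IH e heβ he (heβ.trans hβε)

lemma exists_le_add_of_lt_add {α γ δ : Ordinal} {f : ℕ → Ordinal}
    (hf : ∀ d < δ, ∃ n, d ≤ f n) (h : α < γ + δ) : ∃ n, α ≤ γ + f n := by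
  rcases le_or_gt γ α with hγα | hαγ
  · have hαγ := Ordinal.add_sub_cancel_of_le hγα
    obtain ⟨n, hn⟩ := hf (α - γ) (by rwa [← add_lt_add_iff_left γ, hαγ])
    exact ⟨n, hαγ ▸ add_le_add_right hn γ⟩
  · exact ⟨0, hαγ.le.trans le_self_add⟩

lemma exists_le_fundSeq {α β : Ordinal} (hβ : IsSuccLimit β) (hβε : β < eps0) (hα : α < β) :
    ∃ n : ℕ, α ≤ fundSeq β n := by
  induction β using WellFoundedLT.induction generalizing α with
  | ind β IH =>
  obtain ⟨γ, e, hβeq, heβ, ⟨e', rfl, hfs⟩ | ⟨he, hfs⟩⟩ := fundSeq_cases hβ hβε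
  · simp only [hfs]
    refine exists_le_add_of_lt_add (fun d hd => ?_) (hβeq ▸ hα)
    rw [opow_add, opow_one, lt_mul_iff_of_isSuccLimit isSuccLimit_omega0] at hd
    obtain ⟨c, hcω, hdc⟩ := hd
    obtain ⟨k, rfl⟩ := lt_omega0.1 hcω
    exact ⟨k, hdc.le.trans (by gcongr; exact_mod_cast k.le_succ)⟩
  · simp only [hfs]
    refine exists_le_add_of_lt_add (fun d hd => ?_) (hβeq ▸ hα)
    obtain ⟨c, hce, hdc⟩ := (lt_opow_of_isSuccLimit omega0_ne_zero he).1 hd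
    obtain ⟨n, hcn⟩ := IH e heβ he (heβ.trans hβε) hce
    exact ⟨n, hdc.le.trans (opow_le_opow_right omega0_pos hcn)⟩

lemma Rrel.lt {α β : Ordinal} (h : Rrel α β) (hβ : β < eps0) : α < β := by
  rcases h with rfl | ⟨hlim, n, rfl⟩
  · exact lt_add_one α
  · exact fundSeq_lt_self hlim hβ n

lemma exists_Rrel_of_lt {α β : Ordinal} (hβ : β < eps0) (h : α < β) : ∃ γ, α ≤ γ ∧ Rrel γ β := by
  rcases zero_or_succ_or_isSuccLimit β with rfl | ⟨γ, rfl⟩ | hlim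
  · exact absurd h (not_lt_zero (a := α))
  · exact ⟨γ, lt_succ_iff.1 h, Or.inl (succ_eq_add_one γ)⟩
  · obtain ⟨n, hn⟩ := exists_le_fundSeq hlim hβ h
    exact ⟨_, hn, Or.inr ⟨hlim, n, rfl⟩⟩

lemma lt_of_transGen_Rrel {α β : Ordinal} (h : Relation.TransGen Rrel α β) (hβ : β < eps0) :
    α < β := by
  induction h with
  | single h => exact h.lt hβ
  | tail _ h ih =>
    have hlt := h.lt hβ
    exact (ih (hlt.trans hβ)).trans hlt

lemma transGen_Rrel_of_lt {α β : Ordinal} (hβ : β < eps0) (h : α < β) :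
    Relation.TransGen Rrel α β := by
  induction β using WellFoundedLT.induction generalizing α with
  | ind β IH =>
  obtain ⟨γ, hαγ, hγβ⟩ := exists_Rrel_of_lt hβ h
  have hγ := hγβ.lt hβ
  rcases hαγ.eq_or_lt with rfl | hαγ
  · exact .single hγβ
  · exact (IH γ hγ (hγ.trans hβ) hαγ).tail hγβ

theorem transGen_Rrel_iff_lt_general (α β : Ordinal) (hβ : β < eps0) :
    α < β ↔ Relation.TransGen Rrel α β :=
  ⟨transGen_Rrel_of_lt hβ, (lt_of_transGen_Rrel · hβ)⟩

theorem transGen_Rrel_iff_lt (α β : Ordinal) (hα : α < eps0) (hβ : β < eps0) :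
    α < β ↔ Relation.TransGen Rrel α β :=
  transGen_Rrel_iff_lt_general α β hβ
end
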